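/- Let A be a dm×dn real matrix, let x ∈ ℝ^{dn} have blocks X_i of length d with X_1 = ⋯ = X_{n-k} = 0, X_{n-k+1},…,X_n nonzero, and all entries of x nonnegative. Suppose that for every w ∈ ℝ^{dn} with A w = 0, w ≠ 0, and w_i ≥ 0 for 1 ≤ i ≤ d(n−k), one has −∑_{i=n-k+1}^n (X_iᵀ W_i)/‖X_i‖₂ < ∑_{i=1}^{n-k} ‖W_i‖₂. Then x is the unique minimizer of ∑_{i=1}^n ‖W_i‖₂ over all w ∈ ℝ^{dn} with A w = A x and w_j ≥ 0 for all j. -/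
import Mathlib


open Finset

/-- Euclidean norm of a block. -/
noncomputable def blockNorm {d : ℕ} (v : Fin d → ℝ) : ℝ := Real.sqrt (∑ j, v j ^ 2)

lemma blockNorm_nonneg {d : ℕ} (v : Fin d → ℝ) : 0 ≤ blockNorm v := Real.sqrt_nonneg _

lemma blockNorm_zero {d : ℕ} : blockNorm (0 : Fin d → ℝ) = 0 := by simp [blockNorm]

lemma blockNorm_sq {d : ℕ} (v : Fin d → ℝ) : blockNorm v ^ 2 = ∑ j, v j ^ 2 :=
  Real.sq_sqrt (Finset.sum_nonneg fun j _ => sq_nonneg _)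

lemma blockNorm_pos {d : ℕ} {v : Fin d → ℝ} (h : v ≠ 0) : 0 < blockNorm v := by
  obtain ⟨j, hj⟩ : ∃ j, v j ≠ 0 := by
    by_contra h'; push_neg at h'; exact h (funext h')
  exact Real.sqrt_pos.2 <| Finset.sum_pos'
    (fun i _ => sq_nonneg _) ⟨j, Finset.mem_univ _, by positivity⟩

lemma blockNorm_cs {d : ℕ} (a b : Fin d → ℝ) :
    ∑ j, a j * b j ≤ blockNorm a * blockNorm b := by
  have h := Finset.sum_mul_sq_le_sq_mul_sq Finset.univ a b
  have h2 : (∑ j, a j * b j) ≤ |∑ j, a j * b j| := le_abs_self _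
  calc ∑ j, a j * b j ≤ |∑ j, a j * b j| := h2
    _ = Real.sqrt ((∑ j, a j * b j) ^ 2) := (Real.sqrt_sq_eq_abs _).symm
    _ ≤ Real.sqrt ((∑ j, a j ^ 2) * ∑ j, b j ^ 2) := Real.sqrt_le_sqrt h
    _ = blockNorm a * blockNorm b := by
        rw [Real.sqrt_mul (Finset.sum_nonneg fun j _ => sq_nonneg _)]; rfl

/-- signed null-space condition implies the positive block-sparse x is
the unique minimizer of the positive ℓ₂/ℓ₁ program. -/
theorem l2l1_pos_unique_minimizer (d m n k : ℕ) (hk : k ≤ n)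
    (A : Matrix (Fin (d * m)) (Fin n × Fin d) ℝ)
    (x : Fin n → Fin d → ℝ)
    (hzero : ∀ i : Fin n, (i : ℕ) < n - k → x i = 0)
    (hnonzero : ∀ i : Fin n, n - k ≤ (i : ℕ) → x i ≠ 0)
    (hpos : ∀ i j, 0 ≤ x i j)
    (hns : ∀ w : Fin n → Fin d → ℝ,
      A.mulVec (fun p => w p.1 p.2) = 0 → w ≠ 0 →
      (∀ i : Fin n, ∀ j, (i : ℕ) < n - k → 0 ≤ w i j) →
      -∑ i ∈ univ.filter fun i : Fin n => n - k ≤ (i : ℕ),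
          (∑ j, x i j * w i j) / blockNorm (x i)
        < ∑ i ∈ univ.filter fun i : Fin n => (i : ℕ) < n - k, blockNorm (w i)) :
    ∀ w : Fin n → Fin d → ℝ,
      A.mulVec (fun p => w p.1 p.2) = A.mulVec (fun p => x p.1 p.2) →
      (∀ i j, 0 ≤ w i j) → w ≠ x →
      ∑ i, blockNorm (x i) < ∑ i, blockNorm (w i) := by
  intro w hAw hwpos hwne
  set u : Fin n → Fin d → ℝ := fun i j => w i j - x i j with hu
  have hAu : A.mulVec (fun p => u p.1 p.2) = 0 := by
    have : (fun p : Fin n × Fin d => u p.1 p.2)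
        = (fun p : Fin n × Fin d => w p.1 p.2) - (fun p => x p.1 p.2) := rfl
    rw [this, Matrix.mulVec_sub, hAw, sub_self]
  have hune : u ≠ 0 := by
    intro h
    apply hwne
    funext i j
    have := congrFun (congrFun h i) j
    simpa [hu, sub_eq_zero] using this
  have hupos : ∀ i : Fin n, ∀ j, (i : ℕ) < n - k → 0 ≤ u i j := by
    intro i j hi
    have hx0 : x i = 0 := hzero i hi
    simp [hu, hx0, hwpos i j]
  have hg := hns u hAu hune hupos
  -- for i in the tail part, u i = w i
  have htail : ∀ i : Fin n, (i : ℕ) < n - k → u i = w i := by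
    intro i hi
    funext j
    simp [hu, hzero i hi]
  -- key pointwise inequality for the head part
  have hkey : ∀ i : Fin n, n - k ≤ (i : ℕ) →
      blockNorm (x i) + (∑ j, x i j * u i j) / blockNorm (x i) ≤ blockNorm (w i) := by
    intro i hi
    have hxp : 0 < blockNorm (x i) := blockNorm_pos (hnonzero i hi)
    have hcs : ∑ j, x i j * w i j ≤ blockNorm (x i) * blockNorm (w i) := blockNorm_cs _ _
    have hsplit : ∑ j, x i j * w i j = (∑ j, x i j ^ 2) + ∑ j, x i j * u i j := by
      rw [← Finset.sum_add_distrib]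
      apply Finset.sum_congr rfl
      intro j _
      simp [hu]; ring
    have heq : blockNorm (x i) + (∑ j, x i j * u i j) / blockNorm (x i)
        = (∑ j, x i j * w i j) / blockNorm (x i) := by
      rw [hsplit, add_div, ← blockNorm_sq, sq, mul_div_assoc,
        div_self (ne_of_gt hxp), mul_one]
    rw [heq, div_le_iff₀ hxp, mul_comm]
    exact hcs
  have hsum_key : ∑ i ∈ univ.filter (fun i : Fin n => n - k ≤ (i : ℕ)), blockNorm (x i)
      + ∑ i ∈ univ.filter (fun i : Fin n => n - k ≤ (i : ℕ)),
          (∑ j, x i j * u i j) / blockNorm (x i)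
      ≤ ∑ i ∈ univ.filter (fun i : Fin n => n - k ≤ (i : ℕ)), blockNorm (w i) := by
    rw [← Finset.sum_add_distrib]
    apply Finset.sum_le_sum
    intro i hi
    exact hkey i (Finset.mem_filter.1 hi).2
  have hfilter : (univ.filter fun i : Fin n => ¬ ((i : ℕ) < n - k))
      = univ.filter fun i : Fin n => n - k ≤ (i : ℕ) := by
    apply Finset.filter_congr
    intro i _
    simp [not_lt]
  have hsplitx : ∑ i, blockNorm (x i)
      = ∑ i ∈ univ.filter (fun i : Fin n => n - k ≤ (i : ℕ)), blockNorm (x i) := by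
    rw [← Finset.sum_filter_add_sum_filter_not univ (fun i : Fin n => (i : ℕ) < n - k),
      hfilter]
    have : ∑ i ∈ univ.filter (fun i : Fin n => (i : ℕ) < n - k), blockNorm (x i) = 0 := by
      apply Finset.sum_eq_zero
      intro i hi
      rw [hzero i (Finset.mem_filter.1 hi).2, blockNorm_zero]
    rw [this, zero_add]
  have hsplitw : ∑ i, blockNorm (w i)
      = ∑ i ∈ univ.filter (fun i : Fin n => (i : ℕ) < n - k), blockNorm (w i)
      + ∑ i ∈ univ.filter (fun i : Fin n => n - k ≤ (i : ℕ)), blockNorm (w i) := by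
    rw [← Finset.sum_filter_add_sum_filter_not univ (fun i : Fin n => (i : ℕ) < n - k),
      hfilter]
  have huw : ∑ i ∈ univ.filter (fun i : Fin n => (i : ℕ) < n - k), blockNorm (u i)
      = ∑ i ∈ univ.filter (fun i : Fin n => (i : ℕ) < n - k), blockNorm (w i) := by
    apply Finset.sum_congr rfl
    intro i hi
    rw [htail i (Finset.mem_filter.1 hi).2]
  rw [huw] at hg
  rw [hsplitx, hsplitw]
  linarith
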